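/- Let R be an algebraic curvature tensor on ℝⁿ and define Q(R)(X,Y,Z,W) = Σ_{p,q} R(X,Y,e_p,e_q)R(Z,W,e_p,e_q) + 2Σ_{p,q} R(X,e_p,Z,e_q)R(Y,e_p,W,e_q) − 2Σ_{p,q} R(X,e_p,W,e_q)R(Y,e_p,Z,e_q), where {e_p} is an orthonormal basis. Then for any orthonormal four-frame {e₁,e₂,e₃,e₄}: Q(R)₁₃₁₃ + Q(R)₁₄₁₄ + Q(R)₂₃₂₃ + Q(R)₂₄₂₄ − 2Q(R)₁₂₃₄ = Σ_{p,q}(R₁₃pq − R₂₄pq)² + Σ_{p,q}(R₁₄pq + R₂₃pq)² + 2Σ_{p,q}(R₁p₁q + R₂p₂q)(R₃p₃q + R₄p₄q) − 2Σ_{p,q}R₁₂pq·R₃₄pq − 2Σ_{p,q}(R₁p₃q + R₂p₄q)(R₃p₁q + R₄p₂q) − 2Σ_{p,q}(R₁p₄q − R₂p₃q)(R₄p₁q − R₃p₂q). -/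

import Mathlib

/-!
Both sides are quadratic in `R` and expand into the contractions
`C(a,b,c,d) = ∑ R_abpq R_cdpq` and `S(a,b,c,d) = ∑ R_apbq R_cpdq`. Apart from relabelings of `S`
coming from pair symmetry, the only input is the first Bianchi identity in the form
`R_abpq = R_apbq - R_bpaq`, which turns every `C` into `2 S(a,b,c,d) - 2 S(a,b,d,c)`.
-/

noncomputable section
open scoped BigOperators

/-- Euclidean dot product on `ℝⁿ`. -/
def dotp {n : ℕ} (X Y : Fin n → ℝ) : ℝ := ∑ i, X i * Y i

open Finset

structure IsAlgCurvatureTensor {ι : Type*} (T : ι → ι → ι → ι → ℝ) : Prop where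
  anti : ∀ a b c d, T a b c d = -T b a c d
  pair : ∀ a b c d, T a b c d = T c d a b
  bianchi : ∀ a b c d, T a b c d + T b c a d + T c a b d = 0

def quadraticTerm {ι : Type*} [Fintype ι] (T : ι → ι → ι → ι → ℝ) (i j k l : ι) : ℝ :=
  (∑ p, ∑ q, T i j p q * T k l p q) + 2 * (∑ p, ∑ q, T i p k q * T j p l q)
    - 2 * (∑ p, ∑ q, T i p l q * T j p k q)

namespace IsAlgCurvatureTensor

variable {ι : Type*} {T : ι → ι → ι → ι → ℝ}

theorem of_components {V : Type*} (R : (Fin 4 → V) → ℝ)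
    (hanti : ∀ X Y Z W, R ![X, Y, Z, W] = -R ![Y, X, Z, W])
    (hpair : ∀ X Y Z W, R ![X, Y, Z, W] = R ![Z, W, X, Y])
    (hbianchi : ∀ X Y Z W, R ![X, Y, Z, W] + R ![Y, Z, X, W] + R ![Z, X, Y, W] = 0)
    (b : ι → V) (hT : ∀ i j k l, T i j k l = R ![b i, b j, b k, b l]) :
    IsAlgCurvatureTensor T where
  anti _ _ _ _ := by rw [hT, hT]; exact hanti ..
  pair _ _ _ _ := by rw [hT, hT]; exact hpair ..
  bianchi _ _ _ _ := by rw [hT, hT, hT]; exact hbianchi ..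

theorem eq_sub (hT : IsAlgCurvatureTensor T) (a b p q : ι) :
    T a b p q = T a p b q - T b p a q := by
  linarith [hT.bianchi a b p q, hT.anti p a b q]

theorem sum_sum_swap [Fintype ι] (hT : IsAlgCurvatureTensor T) (a b c d : ι) :
    ∑ p, ∑ q, T a p b q * T c p d q = ∑ p, ∑ q, T b p a q * T d p c q := by
  rw [sum_comm]
  refine sum_congr rfl fun p _ => sum_congr rfl fun q _ => ?_
  rw [hT.pair a q b p, hT.pair c q d p]

theorem sum_sum_mul_eq [Fintype ι] (hT : IsAlgCurvatureTensor T) (a b c d : ι) :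
    ∑ p, ∑ q, T a b p q * T c d p q
      = 2 * ∑ p, ∑ q, T a p b q * T c p d q - 2 * ∑ p, ∑ q, T a p b q * T d p c q := by
  simp only [hT.eq_sub a b, hT.eq_sub c d, sub_mul, mul_sub, sum_sub_distrib]
  rw [hT.sum_sum_swap b a c d, hT.sum_sum_swap b a d c]
  ring

theorem quadraticTerm_combination [Fintype ι] (hT : IsAlgCurvatureTensor T)
    (i₁ i₂ i₃ i₄ : ι) :
    quadraticTerm T i₁ i₃ i₁ i₃ + quadraticTerm T i₁ i₄ i₁ i₄ + quadraticTerm T i₂ i₃ i₂ i₃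
        + quadraticTerm T i₂ i₄ i₂ i₄ - 2 * quadraticTerm T i₁ i₂ i₃ i₄
      = (∑ p, ∑ q, (T i₁ i₃ p q - T i₂ i₄ p q) ^ 2)
        + (∑ p, ∑ q, (T i₁ i₄ p q + T i₂ i₃ p q) ^ 2)
        + 2 * (∑ p, ∑ q, (T i₁ p i₁ q + T i₂ p i₂ q) * (T i₃ p i₃ q + T i₄ p i₄ q))
        - 2 * (∑ p, ∑ q, T i₁ i₂ p q * T i₃ i₄ p q)
        - 2 * (∑ p, ∑ q, (T i₁ p i₃ q + T i₂ p i₄ q) * (T i₃ p i₁ q + T i₄ p i₂ q))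
        - 2 * (∑ p, ∑ q, (T i₁ p i₄ q - T i₂ p i₃ q) * (T i₄ p i₁ q - T i₃ p i₂ q)) := by
  -- the `mul_comm`s orient the products so that the sums match those in the two lemmas
  simp only [quadraticTerm, sq, add_mul, mul_add, sub_mul, mul_sub, sum_add_distrib,
    sum_sub_distrib, mul_comm (T i₂ i₄ _ _) (T i₁ i₃ _ _), mul_comm (T i₂ i₃ _ _) (T i₁ i₄ _ _),
    mul_comm (T i₂ _ i₄ _) (T i₃ _ i₁ _), mul_comm (T i₂ _ i₃ _) (T i₄ _ i₁ _)]
  linear_combination 2 * hT.sum_sum_mul_eq i₁ i₃ i₂ i₄ - 2 * hT.sum_sum_mul_eq i₁ i₄ i₂ i₃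
    + 2 * hT.sum_sum_swap i₃ i₁ i₂ i₄ - 2 * hT.sum_sum_swap i₄ i₁ i₂ i₃

end IsAlgCurvatureTensor

theorem Q_identity {n : ℕ}
    (R : MultilinearMap ℝ (fun _ : Fin 4 => (Fin n → ℝ)) ℝ)
    (hanti : ∀ X Y Z W, R ![X, Y, Z, W] = - R ![Y, X, Z, W])
    (hpair : ∀ X Y Z W, R ![X, Y, Z, W] = R ![Z, W, X, Y])
    (hbianchi : ∀ X Y Z W,
      R ![X, Y, Z, W] + R ![Y, Z, X, W] + R ![Z, X, Y, W] = 0)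
    -- an orthonormal basis `b` of `ℝⁿ`, whose first four vectors form the frame
    (b : Fin n → (Fin n → ℝ))
    -- curvature components with respect to the basis
    (Rt : Fin n → Fin n → Fin n → Fin n → ℝ)
    (hRt : ∀ i j k l, Rt i j k l = R ![b i, b j, b k, b l])
    -- the quadratic curvature term Q(R)
    (Q : Fin n → Fin n → Fin n → Fin n → ℝ)
    (hQ : ∀ i j k l, Q i j k l =
      (∑ p, ∑ q, Rt i j p q * Rt k l p q)
      + 2 * (∑ p, ∑ q, Rt i p k q * Rt j p l q)
      - 2 * (∑ p, ∑ q, Rt i p l q * Rt j p k q))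
    (i₁ i₂ i₃ i₄ : Fin n) :
    Q i₁ i₃ i₁ i₃ + Q i₁ i₄ i₁ i₄ + Q i₂ i₃ i₂ i₃ + Q i₂ i₄ i₂ i₄
        - 2 * Q i₁ i₂ i₃ i₄
      = (∑ p, ∑ q, (Rt i₁ i₃ p q - Rt i₂ i₄ p q) ^ 2)
        + (∑ p, ∑ q, (Rt i₁ i₄ p q + Rt i₂ i₃ p q) ^ 2)
        + 2 * (∑ p, ∑ q, (Rt i₁ p i₁ q + Rt i₂ p i₂ q) *
            (Rt i₃ p i₃ q + Rt i₄ p i₄ q))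
        - 2 * (∑ p, ∑ q, Rt i₁ i₂ p q * Rt i₃ i₄ p q)
        - 2 * (∑ p, ∑ q, (Rt i₁ p i₃ q + Rt i₂ p i₄ q) *
            (Rt i₃ p i₁ q + Rt i₄ p i₂ q))
        - 2 * (∑ p, ∑ q, (Rt i₁ p i₄ q - Rt i₂ p i₃ q) *
            (Rt i₄ p i₁ q - Rt i₃ p i₂ q)) := by
  have hT := IsAlgCurvatureTensor.of_components R hanti hpair hbianchi b hRt
  obtain rfl : Q = quadraticTerm Rt :=
    funext fun i => funext fun j => funext fun k => funext fun l => hQ i j k l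
  exact hT.quadraticTerm_combination i₁ i₂ i₃ i₄
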